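/- The minimum weight of a Hamiltonian cycle on S conforming to T equals min_{a ∈ S, a ≠ r} ( D^r_{C(r)}(a) + dist(a, r) ). -/

import Mathlib

/-! A conforming Hamiltonian cycle, rotated so that it starts at the root `r` and ends at some
`a ≠ r`, is a conforming path from `r` through all of `S` closed by the edge `a r`; conversely
every such path closes up to a conforming cycle, because a subtree avoiding the first point `r`
is a cyclic arc of the cycle exactly when it is a contiguous block of the path. Hence the cycle
weights are exactly the numbers `w(P) + dist(a, r)`, and the two infima agree. For this the
infimum defining each `D^r_{C(r)}(a)` must range over a nonempty set: a depth-first traversal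
that visits the child subtree containing `a` last, and reaches `a` itself only after all its
descendants, is such a path. -/

/-- A rooted tree on a vertex type `V`, given by a parent function under which
every vertex reaches the root. -/
structure ParentTree (V : Type) where
  root : V
  parent : V → V
  parent_root : parent root = root
  reaches_root : ∀ v, ∃ k, parent^[k] v = root

namespace ParentTree

variable {V : Type}

/-- The set `C(u)` of children of `u`. -/
def children (T : ParentTree V) (u : V) : Set V := {v | T.parent v = u ∧ v ≠ u}

/-- The set `T(u)` of descendants of `u` (including `u` itself). -/
def desc (T : ParentTree V) (u : V) : Set V := {b | ∃ k, T.parent^[k] b = u}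

/-- For a set `U` of siblings, `T(U) = ⋃_{u ∈ U} T(u)`. -/
def descU (T : ParentTree V) (U : Set V) : Set V := ⋃ u ∈ U, T.desc u

end ParentTree

/-- The set of points occurring in a list. -/
def listSet {V : Type} (l : List V) : Set V := {x | x ∈ l}

/-- The weight of a path (a list of points), i.e. the sum of distances over
consecutive pairs. -/
def pathWeight {V X : Type} [MetricSpace X] (f : V → X) (l : List V) : ℝ :=
  ((l.zip l.tail).map fun p => dist (f p.1) (f p.2)).sum

/-- The elements of `A` occur consecutively in the list `l`. -/
def ConsecutiveIn {V : Type} (A : Set V) (l : List V) : Prop :=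
  ∃ m : List V, m <:+: l ∧ listSet m = A

/-- A path conforms to the rooted tree `T` if for every node `w` with
`T(w)` contained in the vertex set of the path, the elements of `T(w)` occur
consecutively in the path. -/
def PathConforms {V : Type} (T : ParentTree V) (l : List V) : Prop :=
  ∀ w : V, T.desc w ⊆ listSet l → ConsecutiveIn (T.desc w) l

/-- `DD T f u Vs a` : the minimum weight `D^u_{Vs}(a)` of a conforming path of
pairwise distinct points that starts at `u`, has vertex set `{u} ∪ T(Vs)`, and
ends at `a`. -/
noncomputable def DD {V X : Type} [MetricSpace X] (T : ParentTree V) (f : V → X)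
    (u : V) (Vs : Set V) (a : V) : ℝ :=
  sInf {w | ∃ l : List V, l.Nodup ∧ l.head? = some u ∧ l.getLast? = some a ∧
    listSet l = {u} ∪ T.descU Vs ∧ PathConforms T l ∧ pathWeight f l = w}

/-- The weight of a Hamiltonian cycle given as a list: the sum of distances
over cyclically consecutive pairs. -/
def cycleWeight {V X : Type} [MetricSpace X] (f : V → X) (h : List V) : ℝ :=
  ((h.zip (h.rotate 1)).map fun p => dist (f p.1) (f p.2)).sum

/-- A Hamiltonian cycle on the point set: a cyclic ordering of all points,
represented as a duplicate-free list containing every point. -/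
def IsHamCycle {V : Type} (h : List V) : Prop := h.Nodup ∧ ∀ x : V, x ∈ h

/-- The set `A` forms a contiguous cyclic arc of the cycle `h`. -/
def IsCyclicArc {V : Type} (A : Set V) (h : List V) : Prop :=
  ∃ i : ℕ, listSet ((h.rotate i).take A.ncard) = A

/-- A Hamiltonian cycle conforms to the rooted tree `T` if for every node `u`
the set `T(u)` of descendants of `u` forms a contiguous cyclic arc of the cycle. -/
def CycleConforms {V : Type} (T : ParentTree V) (h : List V) : Prop :=
  ∀ u : V, IsCyclicArc (T.desc u) h

lemma sInf_setOf_add_eq {ι : Type*} {p : ι → Prop} {P : ι → Set ℝ} {c : ι → ℝ}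
    (hp : ∃ a, p a) (hP : ∀ a, p a → (P a).Nonempty) (hP0 : ∀ a, ∀ x ∈ P a, 0 ≤ x)
    (hc : ∀ a, 0 ≤ c a) :
    sInf {w | ∃ a, p a ∧ ∃ x ∈ P a, w = x + c a} =
      sInf {r | ∃ a, p a ∧ r = sInf (P a) + c a} := by
  obtain ⟨a₀, ha₀⟩ := hp
  obtain ⟨x₀, hx₀⟩ := hP a₀ ha₀
  have hbdd : BddBelow {w | ∃ a, p a ∧ ∃ x ∈ P a, w = x + c a} := by
    refine ⟨0, ?_⟩
    rintro _ ⟨a, -, x, hx, rfl⟩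
    exact add_nonneg (hP0 a x hx) (hc a)
  have hbdd' : BddBelow {r | ∃ a, p a ∧ r = sInf (P a) + c a} := by
    refine ⟨0, ?_⟩
    rintro _ ⟨a, -, rfl⟩
    exact add_nonneg (Real.sInf_nonneg (hP0 a)) (hc a)
  apply le_antisymm
  · refine le_csInf ⟨_, a₀, ha₀, rfl⟩ ?_
    rintro _ ⟨a, ha, rfl⟩
    rw [← sub_le_iff_le_add]
    refine le_csInf (hP a ha) fun x hx => ?_
    rw [sub_le_iff_le_add]
    exact csInf_le hbdd ⟨a, ha, x, hx, rfl⟩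
  · refine le_csInf ⟨_, a₀, ha₀, x₀, hx₀, rfl⟩ ?_
    rintro _ ⟨a, ha, x, hx, rfl⟩
    calc sInf {r | ∃ a, p a ∧ r = sInf (P a) + c a} ≤ sInf (P a) + c a :=
          csInf_le hbdd' ⟨a, ha, rfl⟩
      _ ≤ x + c a := add_le_add_left (csInf_le ⟨0, hP0 a⟩ hx) _

namespace ParentTree

variable {V : Type} (T : ParentTree V)

lemma mem_desc_self (u : V) : u ∈ T.desc u := ⟨0, rfl⟩

variable {T}

lemma desc_subset {w u : V} (h : w ∈ T.desc u) : T.desc w ⊆ T.desc u := by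
  obtain ⟨k, hk⟩ := h
  rintro x ⟨j, hj⟩
  exact ⟨k + j, by rw [Function.iterate_add_apply, hj, hk]⟩

lemma eq_root_of_isPeriodicPt {u : V} {m : ℕ} (hm : 0 < m)
    (h : Function.IsPeriodicPt T.parent m u) : u = T.root := by
  obtain ⟨k, hk⟩ := T.reaches_root u
  have hle : k ≤ m * (k + 1) := by nlinarith
  rw [← (h.mul_const (k + 1)).eq, ← Nat.sub_add_cancel hle, Function.iterate_add_apply, hk,
    Function.iterate_fixed T.parent_root]

lemma root_notMem_desc {w : V} (hw : w ≠ T.root) : T.root ∉ T.desc w := by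
  rintro ⟨k, hk⟩
  exact hw (by rw [← hk, Function.iterate_fixed T.parent_root])

lemma notMem_desc_of_parent_eq {c u : V} (hc : T.parent c = u) (hcu : c ≠ u) :
    u ∉ T.desc c := by
  rintro ⟨k, hk⟩
  have hu : u = T.root :=
    eq_root_of_isPeriodicPt k.succ_pos (by rw [Function.IsPeriodicPt, Function.IsFixedPt,
      Function.iterate_succ_apply', hk, hc])
  subst hu
  exact root_notMem_desc hcu ⟨k, hk⟩

lemma parent_mem_desc {v u : V} (h : v ∈ T.desc u) (hvu : v ≠ u) : T.parent v ∈ T.desc u := by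
  obtain ⟨_ | k, hk⟩ := h
  · exact absurd hk hvu
  · exact ⟨k, by rwa [← Function.iterate_succ_apply]⟩

lemma mem_desc_or_mem_desc {x c c' : V} (hc : x ∈ T.desc c) (hc' : x ∈ T.desc c') :
    c ∈ T.desc c' ∨ c' ∈ T.desc c := by
  obtain ⟨k, rfl⟩ := hc
  obtain ⟨k', rfl⟩ := hc'
  rcases le_total k k' with h | h
  · exact Or.inl ⟨k' - k, by rw [← Function.iterate_add_apply, Nat.sub_add_cancel h]⟩
  · exact Or.inr ⟨k - k', by rw [← Function.iterate_add_apply, Nat.sub_add_cancel h]⟩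

lemma disjoint_desc_of_parent_eq {c c' u : V} (hc : T.parent c = u) (hcu : c ≠ u)
    (hc' : T.parent c' = u) (hcu' : c' ≠ u) (hne : c ≠ c') :
    Disjoint (T.desc c) (T.desc c') := by
  refine Set.disjoint_left.2 fun x hx hx' => ?_
  rcases mem_desc_or_mem_desc hx hx' with h | h
  · exact notMem_desc_of_parent_eq hc' hcu' (hc ▸ parent_mem_desc h hne)
  · exact notMem_desc_of_parent_eq hc hcu (hc' ▸ parent_mem_desc h hne.symm)

lemma exists_child_of_mem_desc {w u : V} (h : w ∈ T.desc u) (hwu : w ≠ u) :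
    ∃ c ∈ T.children u, w ∈ T.desc c := by
  obtain ⟨k, hk⟩ := h
  induction k generalizing w with
  | zero => exact absurd hk hwu
  | succ k ih =>
    rw [Function.iterate_succ_apply] at hk
    by_cases hp : T.parent w = u
    · exact ⟨w, ⟨hp, hwu⟩, mem_desc_self T w⟩
    · obtain ⟨c, hc, hwc⟩ := ih hp hk
      exact ⟨c, hc, desc_subset hwc ⟨1, rfl⟩⟩

variable (T)

lemma desc_root : T.desc T.root = Set.univ :=
  Set.eq_univ_of_forall T.reaches_root

lemma desc_eq_union (u : V) : T.desc u = {u} ∪ T.descU (T.children u) := by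
  ext w
  simp only [descU, Set.mem_union, Set.mem_singleton_iff, Set.mem_iUnion, exists_prop]
  constructor
  · intro hw
    by_cases hwu : w = u
    · exact Or.inl hwu
    · exact Or.inr (exists_child_of_mem_desc hw hwu)
  · rintro (rfl | ⟨c, hc, hw⟩)
    · exact mem_desc_self T w
    · exact desc_subset ⟨1, hc.1⟩ hw

lemma ncard_desc_lt [Finite V] {c u : V} (hc : c ∈ T.children u) :
    (T.desc c).ncard < (T.desc u).ncard :=
  Set.ncard_lt_ncard ⟨desc_subset ⟨1, hc.1⟩, fun h =>
    notMem_desc_of_parent_eq hc.1 hc.2 (h (mem_desc_self T u))⟩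

end ParentTree

section Lists

variable {V : Type}

lemma ConsecutiveIn.mono {A : Set V} {m l : List V} (hA : ConsecutiveIn A m) (hml : m <:+: l) :
    ConsecutiveIn A l :=
  let ⟨m', hm', hset⟩ := hA
  ⟨m', hm'.trans hml, hset⟩

lemma ncard_listSet {l : List V} (h : l.Nodup) : (listSet l).ncard = l.length := by
  classical
  rw [show listSet l = ↑l.toFinset by ext; simp [listSet], Set.ncard_coe_finset,
    List.toFinset_card_of_nodup h]

lemma ConsecutiveIn.isCyclicArc {A : Set V} {h : List V} (hnd : h.Nodup)
    (hA : ConsecutiveIn A h) : IsCyclicArc A h := by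
  obtain ⟨m, ⟨s, t, rfl⟩, rfl⟩ := hA
  refine ⟨s.length, ?_⟩
  rw [ncard_listSet (hnd.sublist (List.infix_append s m t).sublist), List.append_assoc,
    List.rotate_append_length_eq, List.append_assoc, List.take_left]

lemma IsCyclicArc.rotate {A : Set V} {h : List V} (harc : IsCyclicArc A h) (i : ℕ) :
    IsCyclicArc A (h.rotate i) := by
  obtain ⟨j, hj⟩ := harc
  rcases eq_or_ne h [] with rfl | hne
  · exact ⟨j, by simpa using hj⟩
  have hi : i ≤ j + h.length * i :=
    le_add_left (Nat.le_mul_of_pos_left i (List.length_pos_iff.2 hne))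
  refine ⟨j + h.length * i - i, ?_⟩
  rwa [List.rotate_rotate, Nat.add_sub_cancel' hi, ← List.rotate_rotate,
    ← List.length_rotate h j, List.rotate_length_mul]

lemma IsCyclicArc.consecutiveIn {A : Set V} {h : List V} {r : V} (harc : IsCyclicArc A h)
    (hh : h.head? = some r) (hr : r ∉ A) : ConsecutiveIn A h := by
  obtain ⟨i, hi⟩ := harc
  obtain ⟨t, rfl⟩ := List.head?_eq_some_iff.1 hh
  rw [← List.rotate_mod, List.rotate_eq_drop_append_take (Nat.mod_lt _ (by simp)).le,
    List.take_append, List.take_take] at hi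
  -- a nonempty wrapped-around part of the arc would contain the head `r`
  have hwrap : ∀ k, r ∉ (r :: t).take k → (r :: t).take k = [] := by
    rintro (_ | k) hk
    · rfl
    · simp at hk
  rw [hwrap _ fun hmem => hr (hi ▸ List.mem_append_right _ hmem), List.append_nil] at hi
  exact ⟨_, (List.take_prefix _ _).isInfix.trans (List.drop_suffix _ _).isInfix, hi⟩

end Lists

section Weights

variable {V X : Type} [MetricSpace X] (f : V → X)

lemma pathWeight_nonneg (l : List V) : 0 ≤ pathWeight f l :=
  List.sum_nonneg fun _ hx => by
    obtain ⟨p, _, rfl⟩ := List.mem_map.1 hx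
    exact dist_nonneg

lemma cycleWeight_rotate (l : List V) (n : ℕ) : cycleWeight f (l.rotate n) = cycleWeight f l := by
  unfold cycleWeight
  rw [List.rotate_rotate, add_comm, ← List.rotate_rotate, List.zip,
    ← List.zipWith_rotate_distrib _ _ _ _ (List.length_rotate l 1).symm, ← List.zip,
    List.map_rotate]
  exact (List.rotate_perm _ n).sum_eq

lemma zip_cons_concat (x y : V) (t : List V) :
    (x :: t).zip (t ++ [y]) = (x :: t).zip t ++ [((x :: t).getLast (List.cons_ne_nil x t), y)] := by
  induction t generalizing x with
  | nil => rfl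
  | cons z s ih => simp [ih]

lemma cycleWeight_eq_pathWeight_add {l : List V} {r a : V} (hh : l.head? = some r)
    (hl : l.getLast? = some a) : cycleWeight f l = pathWeight f l + dist (f a) (f r) := by
  obtain ⟨t, rfl⟩ := List.head?_eq_some_iff.1 hh
  rw [List.getLast?_eq_some_getLast (List.cons_ne_nil r t), Option.some_inj] at hl
  simp [cycleWeight, pathWeight, zip_cons_concat, hl]

end Weights

namespace ParentTree

variable {V : Type} (T : ParentTree V)

def IsConformingOrder (u : V) (l : List V) : Prop :=
  l.Nodup ∧ listSet l = T.desc u ∧ ∀ w ∈ T.desc u, ConsecutiveIn (T.desc w) l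

variable {T}

lemma IsConformingOrder.mem_iff {u x : V} {l : List V} (h : T.IsConformingOrder u l) :
    x ∈ l ↔ x ∈ T.desc u := by
  rw [← h.2.1]; rfl

lemma IsConformingOrder.of_children {u : V} {L : List V} (hL : L.Nodup)
    (hLmem : ∀ c, c ∈ L ↔ c ∈ T.children u) {g : V → List V}
    (hg : ∀ c ∈ L, T.IsConformingOrder c (g c)) {l : List V}
    (hperm : l.Perm (u :: L.flatMap g)) (hinf : L.flatMap g <:+: l) :
    T.IsConformingOrder u l := by
  have hset : listSet (L.flatMap g) = T.descU (T.children u) := by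
    ext x
    simp only [listSet, List.mem_flatMap, descU, Set.mem_iUnion, exists_prop, ← hLmem]
    exact exists_congr fun c => and_congr_right fun hc => (hg c hc).mem_iff
  have hu : u ∉ L.flatMap g := fun hu => by
    obtain ⟨c, hc, huc⟩ := Set.mem_iUnion₂.1 (hset ▸ hu : u ∈ T.descU (T.children u))
    exact notMem_desc_of_parent_eq hc.1 hc.2 huc
  have hnd : (L.flatMap g).Nodup := by
    refine List.nodup_flatMap.2 ⟨fun c hc => (hg c hc).1,
      hL.imp_of_mem fun {c c'} hcL hcL' hne x hx hx' => ?_⟩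
    have hc := (hLmem c).1 hcL
    have hc' := (hLmem c').1 hcL'
    exact Set.disjoint_left.1 (disjoint_desc_of_parent_eq hc.1 hc.2 hc'.1 hc'.2 hne)
      ((hg c hcL).mem_iff.1 hx) ((hg c' hcL').mem_iff.1 hx')
  have hlset : listSet l = T.desc u := by
    ext x
    rw [desc_eq_union, ← hset]
    exact hperm.mem_iff.trans List.mem_cons
  refine ⟨hperm.nodup_iff.2 (List.nodup_cons.2 ⟨hu, hnd⟩), hlset, fun w hw => ?_⟩
  by_cases hwu : w = u
  · exact ⟨l, List.infix_rfl, hwu ▸ hlset⟩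
  obtain ⟨c, hc, hwc⟩ := exists_child_of_mem_desc hw hwu
  have hc := (hLmem c).2 hc
  exact (((hg c hc).2.2 w hwc).mono (List.infix_flatMap_of_mem hc g)).mono hinf

variable (T)

lemma exists_list_children_getLast [Finite V] (a u : V) :
    ∃ L : List V, L.Nodup ∧ (∀ c, c ∈ L ↔ c ∈ T.children u) ∧ (a ∈ T.desc u → a ≠ u →
      ∃ c ∈ T.children u, a ∈ T.desc c ∧ L.getLast? = some c) := by
  classical
  set s := (Set.toFinite (T.children u)).toFinset
  by_cases ha : a ∈ T.desc u ∧ a ≠ u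
  · obtain ⟨c, hc, hac⟩ := exists_child_of_mem_desc ha.1 ha.2
    refine ⟨(s.erase c).toList ++ [c], ?_, fun x => ?_, fun _ _ => ⟨c, hc, hac, by simp⟩⟩
    · simp +contextual [List.nodup_append, Finset.nodup_toList]
    · by_cases hx : x = c <;> simp [s, hx, hc]
  · exact ⟨s.toList, s.nodup_toList, by simp [s], fun h h' => absurd ⟨h, h'⟩ ha⟩

lemma exists_isConformingOrder [Finite V] (a u : V) :
    ∃ l, T.IsConformingOrder u l ∧ (u ≠ a → l.head? = some u) ∧
      (a ∈ T.desc u → l.getLast? = some a) := by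
  induction hn : (T.desc u).ncard using Nat.strong_induction_on generalizing u with
  | _ n ih =>
  have hsub : ∀ c, ∃ l, c ∈ T.children u → T.IsConformingOrder c l ∧
      (a ∈ T.desc c → l.getLast? = some a) := fun c => by
    by_cases hc : c ∈ T.children u
    · obtain ⟨l, hl, -, hlast⟩ := ih _ (hn ▸ T.ncard_desc_lt hc) c rfl
      exact ⟨l, fun _ => ⟨hl, hlast⟩⟩
    · exact ⟨[], fun h => absurd h hc⟩
  choose g hg using hsub
  obtain ⟨L, hL, hLmem, hLlast⟩ := T.exists_list_children_getLast a u
  have hgL : ∀ c ∈ L, T.IsConformingOrder c (g c) := fun c hc => (hg c ((hLmem c).1 hc)).1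
  by_cases hua : u = a
  · subst hua
    exact ⟨L.flatMap g ++ [u], .of_children hL hLmem hgL (List.perm_append_singleton _ _)
      (List.prefix_append _ _).isInfix, fun h => absurd rfl h, fun _ => by simp⟩
  refine ⟨u :: L.flatMap g, .of_children hL hLmem hgL (List.Perm.refl _)
    (List.suffix_cons _ _).isInfix, fun _ => rfl, fun ha => ?_⟩
  obtain ⟨c, hc, hac, hlast⟩ := hLlast ha (Ne.symm hua)
  obtain ⟨L', rfl⟩ := List.getLast?_eq_some_iff.1 hlast
  simp [List.getLast?_cons, (hg c hc).2 hac]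

end ParentTree

section Cycles

variable {V X : Type}

def IsConformingPath (T : ParentTree V) (u : V) (Vs : Set V) (a : V) (l : List V) : Prop :=
  l.Nodup ∧ l.head? = some u ∧ l.getLast? = some a ∧ listSet l = {u} ∪ T.descU Vs ∧
    PathConforms T l

lemma DD_eq_sInf [MetricSpace X] (T : ParentTree V) (f : V → X) (u : V) (Vs : Set V) (a : V) :
    DD T f u Vs a = sInf {w | ∃ l, IsConformingPath T u Vs a l ∧ pathWeight f l = w} := by
  simp only [DD, IsConformingPath, and_assoc]

variable {T : ParentTree V}

lemma isConformingPath_root_iff {l : List V} {a : V} (hh : l.head? = some T.root)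
    (hl : l.getLast? = some a) :
    IsConformingPath T T.root (T.children T.root) a l ↔ IsHamCycle l ∧ CycleConforms T l := by
  have hall : listSet l = Set.univ ↔ ∀ x, x ∈ l := Set.eq_univ_iff_forall
  rw [IsConformingPath, ← T.desc_eq_union, T.desc_root, hall]
  constructor
  · rintro ⟨hnd, -, -, hmem, hpc⟩
    exact ⟨⟨hnd, hmem⟩, fun w => (hpc w fun x _ => hmem x).isCyclicArc hnd⟩
  · rintro ⟨⟨hnd, hmem⟩, hconf⟩
    refine ⟨hnd, hh, hl, hmem, fun w _ => ?_⟩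
    by_cases hw : w = T.root
    · exact ⟨l, List.infix_rfl, by rw [hw, T.desc_root, hall]; exact hmem⟩
    · exact (hconf w).consecutiveIn hh (ParentTree.root_notMem_desc hw)

lemma exists_isConformingPath_root [Finite V] {a : V} (ha : a ≠ T.root) :
    ∃ l, IsConformingPath T T.root (T.children T.root) a l := by
  obtain ⟨l, ⟨hnd, hset, hcons⟩, hh, hl⟩ := T.exists_isConformingOrder a T.root
  refine ⟨l, hnd, hh ha.symm, hl (T.desc_root ▸ Set.mem_univ a), ?_,
    fun w _ => hcons w (T.desc_root ▸ Set.mem_univ w)⟩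
  rw [hset, T.desc_eq_union]

lemma exists_rotate_isConformingPath {h : List V} {x : V} (hx : x ≠ T.root)
    (hham : IsHamCycle h) (hconf : CycleConforms T h) :
    ∃ i a, a ≠ T.root ∧ IsConformingPath T T.root (T.children T.root) a (h.rotate i) := by
  obtain ⟨i, hi, hroot⟩ := List.mem_iff_getElem.1 (hham.2 T.root)
  have hh : (h.rotate i).head? = some T.root := by
    rw [List.head?_rotate hi, List.getElem?_eq_getElem hi, hroot]
  obtain ⟨t, ht⟩ : ∃ t, h.rotate i = T.root :: t := List.head?_eq_some_iff.1 hh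
  have hnd : (h.rotate i).Nodup := List.nodup_rotate.2 hham.1
  have hxt : x ∈ t := by
    have := (List.mem_rotate (n := i)).2 (hham.2 x)
    rw [ht] at this
    exact (List.mem_cons.1 this).resolve_left hx
  have ht0 : t ≠ [] := List.ne_nil_of_mem hxt
  refine ⟨i, t.getLast ht0, ?_, (isConformingPath_root_iff hh ?_).2
    ⟨⟨hnd, fun y => List.mem_rotate.2 (hham.2 y)⟩, fun w => (hconf w).rotate i⟩⟩
  · rintro heq
    rw [ht, List.nodup_cons] at hnd
    exact hnd.1 (heq ▸ List.getLast_mem ht0)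
  · rw [ht, List.getLast?_cons, List.getLast?_eq_some_getLast ht0]
    rfl

lemma setOf_cycleWeight_eq [MetricSpace X] (f : V → X) {x : V} (hx : x ≠ T.root) :
    {w | ∃ h : List V, IsHamCycle h ∧ CycleConforms T h ∧ cycleWeight f h = w} =
      {w | ∃ a, a ≠ T.root ∧ ∃ p ∈ {w | ∃ l, IsConformingPath T T.root (T.children T.root) a l ∧
        pathWeight f l = w}, w = p + dist (f a) (f T.root)} := by
  ext w
  constructor
  · rintro ⟨h, hham, hconf, rfl⟩
    obtain ⟨i, a, ha, hpath⟩ := exists_rotate_isConformingPath hx hham hconf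
    refine ⟨a, ha, _, ⟨_, hpath, rfl⟩, ?_⟩
    rw [← cycleWeight_rotate f h i, cycleWeight_eq_pathWeight_add f hpath.2.1 hpath.2.2.1]
  · rintro ⟨a, -, _, ⟨l, hpath, rfl⟩, rfl⟩
    obtain ⟨hham, hconf⟩ := (isConformingPath_root_iff hpath.2.1 hpath.2.2.1).1 hpath
    exact ⟨l, hham, hconf, cycleWeight_eq_pathWeight_add f hpath.2.1 hpath.2.2.1⟩

end Cycles

theorem stmt2_general {V X : Type} [Fintype V] [MetricSpace X]
    (hn : 3 ≤ Fintype.card V) (f : V → X)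
    (T : ParentTree V) :
    sInf {w | ∃ h : List V, IsHamCycle h ∧ CycleConforms T h ∧ cycleWeight f h = w} =
    sInf {r | ∃ a : V, a ≠ T.root ∧
      r = DD T f T.root (T.children T.root) a + dist (f a) (f T.root)} := by
  obtain ⟨x, hx⟩ := Fintype.exists_ne_of_one_lt_card (by omega) T.root
  simp only [setOf_cycleWeight_eq f hx, DD_eq_sInf]
  refine sInf_setOf_add_eq ⟨x, hx⟩ (fun a ha => ?_) ?_ fun _ => dist_nonneg
  · obtain ⟨l, hl⟩ := exists_isConformingPath_root ha
    exact ⟨_, l, hl, rfl⟩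
  · rintro a _ ⟨l, -, rfl⟩
    exact pathWeight_nonneg f l

/-- The minimum weight of a Hamiltonian cycle conforming to `T` equals
`min_{a ≠ r} ( D^r_{C(r)}(a) + dist(a, r) )`. -/
theorem stmt2 {V X : Type} [Fintype V] [MetricSpace X]
    (hn : 3 ≤ Fintype.card V) (f : V → X) (hf : Function.Injective f)
    (T : ParentTree V) :
    sInf {w | ∃ h : List V, IsHamCycle h ∧ CycleConforms T h ∧ cycleWeight f h = w} =
    sInf {r | ∃ a : V, a ≠ T.root ∧
      r = DD T f T.root (T.children T.root) a + dist (f a) (f T.root)} :=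
  stmt2_general hn f T
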